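/- arXiv:1704.07686 — 8 statements merged into one kernel-verified Lean document; each statement's English description precedes it below -/
import Mathlib

section
/- For all integers n ≥ 0, k ≥ 0, m with 0 ≤ m ≤ n, and all integers l: (i) if 0 ≤ l ≤ k then Z(m,n)·B(l,k) = B(m+l, n+k); (ii) if −1 ≤ l ≤ k+1 then Z(m,n)·A(l,k) = A(m+l, n+k) + [((k+2)·m − n·(l+1)) / ((k+2)·(k+n+2))]·B(m+l, n+k). (Module-structure part of Lemma 2.1.) -/
/-- Monomial `x^a * y^b` for integer exponents, zero if an exponent is negative. -/
noncomputable def M (a b : ℤ) : ℝ × ℝ → ℝ :=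
  fun p => if 0 ≤ a ∧ 0 ≤ b then p.1 ^ a.toNat * p.2 ^ b.toNat else 0

/-- The vector field `A(l,k)`. -/
noncomputable def A (l k : ℤ) : ℝ × ℝ → ℝ × ℝ :=
  fun p => (((k : ℝ) - (l : ℝ) + 1) / ((k : ℝ) + 2) * M (l + 1) (k - l) p,
            -(((l : ℝ) + 1) / ((k : ℝ) + 2)) * M l (k - l + 1) p)

/-- The vector field `B(l,k)`. -/
noncomputable def B (l k : ℤ) : ℝ × ℝ → ℝ × ℝ :=
  fun p => (M (l + 1) (k - l) p, M l (k - l + 1) p)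

/-- The scalar monomial function `Z(l,k)`. -/
noncomputable def Z (l k : ℤ) : ℝ × ℝ → ℝ := M l (k - l)

/-- Lie bracket of planar vector fields: `[X,Y](p) = DY(p)(X(p)) - DX(p)(Y(p))`. -/
noncomputable def lieBracket (X Y : ℝ × ℝ → ℝ × ℝ) : ℝ × ℝ → ℝ × ℝ :=
  fun p => fderiv ℝ Y p (X p) - fderiv ℝ X p (Y p)

lemma M_mul' (a b c d a' b' : ℤ) (ha : 0 ≤ a) (hb : 0 ≤ b) (hc : 0 ≤ c) (hd : 0 ≤ d)
    (h1 : a + c = a') (h2 : b + d = b') (p : ℝ × ℝ) :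
    M a b p * M c d p = M a' b' p := by
  subst h1 h2
  simp only [M, if_pos (⟨ha, hb⟩ : (0:ℤ) ≤ a ∧ (0:ℤ) ≤ b), if_pos (⟨hc, hd⟩ : (0:ℤ) ≤ c ∧ (0:ℤ) ≤ d),
    if_pos (⟨add_nonneg ha hc, add_nonneg hb hd⟩ : (0:ℤ) ≤ a + c ∧ (0:ℤ) ≤ b + d),
    Int.toNat_add ha hc, Int.toNat_add hb hd, pow_add]
  ring


/-- Module-structure part of Lemma 2.1. -/
theorem stmt0 (n k m l : ℤ) (hn : 0 ≤ n) (hk : 0 ≤ k) (hm0 : 0 ≤ m) (hmn : m ≤ n) :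
    (0 ≤ l → l ≤ k →
      (fun p => Z m n p • B l k p) = B (m + l) (n + k)) ∧
    (-1 ≤ l → l ≤ k + 1 →
      (fun p => Z m n p • A l k p) =
        fun p => A (m + l) (n + k) p +
          ((((k : ℝ) + 2) * (m : ℝ) - (n : ℝ) * ((l : ℝ) + 1)) /
            (((k : ℝ) + 2) * ((k : ℝ) + (n : ℝ) + 2))) • B (m + l) (n + k) p) := by
  have hk2 : ((k : ℝ) + 2) ≠ 0 := by positivity
  have hnk2 : ((k : ℝ) + (n : ℝ) + 2) ≠ 0 := by
    have : (0:ℝ) ≤ (k:ℝ) := by exact_mod_cast hk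
    have : (0:ℝ) ≤ (n:ℝ) := by exact_mod_cast hn
    positivity
  constructor
  · intro hl0 hlk
    funext p
    have h1 : M m (n - m) p * M (l + 1) (k - l) p = M (m + l + 1) (n + k - (m + l)) p :=
      M_mul' _ _ _ _ _ _ hm0 (by omega) (by omega) (by omega) (by ring) (by omega) p
    have h2 : M m (n - m) p * M l (k - l + 1) p = M (m + l) (n + k - (m + l) + 1) p :=
      M_mul' _ _ _ _ _ _ hm0 (by omega) hl0 (by omega) (by ring) (by omega) p
    simp only [Z, B, Prod.smul_mk, smul_eq_mul, Prod.mk.injEq]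
    exact ⟨h1, h2⟩
  · intro hl1 hlk1
    funext p
    simp only [Z, A, B, Prod.smul_mk, smul_eq_mul, Prod.mk.injEq, Prod.mk_add_mk]
    push_cast
    by_cases hl : l = -1
    · subst hl
      have h1 : M m (n - m) p * M (-1 + 1) (k - (-1)) p = M (m + -1 + 1) (n + k - (m + -1)) p :=
        M_mul' _ _ _ _ _ _ hm0 (by omega) (by omega) (by omega) (by ring) (by omega) p
      constructor
      · have hc : ((k:ℝ) - (-1) + 1) / ((k:ℝ) + 2)
            = ((n:ℝ) + (k:ℝ) - ((m:ℝ) + (-1)) + 1) / ((n:ℝ) + (k:ℝ) + 2)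
            + (((k:ℝ) + 2) * (m:ℝ) - (n:ℝ) * ((-1:ℝ) + 1)) / (((k:ℝ) + 2) * ((k:ℝ) + (n:ℝ) + 2)) := by
          field_simp
          ring
        push_cast at h1 hc ⊢
        linear_combination (((k:ℝ) - (-1) + 1) / ((k:ℝ) + 2)) * h1
          + M (m + -1 + 1) (n + k - (m + -1)) p * hc
      · have hc : (0:ℝ) = -(((m:ℝ) + (-1)) + 1) / ((n:ℝ) + (k:ℝ) + 2)
            + (((k:ℝ) + 2) * (m:ℝ) - (n:ℝ) * ((-1:ℝ) + 1)) / (((k:ℝ) + 2) * ((k:ℝ) + (n:ℝ) + 2)) := by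
          field_simp
          ring
        push_cast at hc ⊢
        linear_combination M (m + -1) (n + k - (m + -1) + 1) p * hc
    by_cases hl' : l = k + 1
    · subst hl'
      have h2 : M m (n - m) p * M (k + 1) (k - (k + 1) + 1) p
          = M (m + (k + 1)) (n + k - (m + (k + 1)) + 1) p :=
        M_mul' _ _ _ _ _ _ hm0 (by omega) (by omega) (by omega) (by ring) (by omega) p
      constructor
      · have hc : (0:ℝ) = ((n:ℝ) + (k:ℝ) - ((m:ℝ) + ((k:ℝ) + 1)) + 1) / ((n:ℝ) + (k:ℝ) + 2)
            + (((k:ℝ) + 2) * (m:ℝ) - (n:ℝ) * (((k:ℝ) + 1) + 1)) / (((k:ℝ) + 2) * ((k:ℝ) + (n:ℝ) + 2)) := by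
          field_simp
          ring
        push_cast at hc ⊢
        linear_combination M (m + (k + 1) + 1) (n + k - (m + (k + 1))) p * hc
      · have hc : -(((k:ℝ) + 1) + 1) / ((k:ℝ) + 2)
            = -(((m:ℝ) + ((k:ℝ) + 1)) + 1) / ((n:ℝ) + (k:ℝ) + 2)
            + (((k:ℝ) + 2) * (m:ℝ) - (n:ℝ) * (((k:ℝ) + 1) + 1)) / (((k:ℝ) + 2) * ((k:ℝ) + (n:ℝ) + 2)) := by
          field_simp
          ring
        push_cast at h2 hc ⊢
        linear_combination (-(((k:ℝ) + 1) + 1) / ((k:ℝ) + 2)) * h2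
          + M (m + (k + 1)) (n + k - (m + (k + 1)) + 1) p * hc
    · have hl0 : 0 ≤ l := by omega
      have hlk : l ≤ k := by omega
      have h1 : M m (n - m) p * M (l + 1) (k - l) p = M (m + l + 1) (n + k - (m + l)) p :=
        M_mul' _ _ _ _ _ _ hm0 (by omega) (by omega) (by omega) (by ring) (by omega) p
      have h2 : M m (n - m) p * M l (k - l + 1) p = M (m + l) (n + k - (m + l) + 1) p :=
        M_mul' _ _ _ _ _ _ hm0 (by omega) hl0 (by omega) (by ring) (by omega) p
      constructor
      · have hc : ((k:ℝ) - (l:ℝ) + 1) / ((k:ℝ) + 2)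
            = ((n:ℝ) + (k:ℝ) - ((m:ℝ) + (l:ℝ)) + 1) / ((n:ℝ) + (k:ℝ) + 2)
            + (((k:ℝ) + 2) * (m:ℝ) - (n:ℝ) * ((l:ℝ) + 1)) / (((k:ℝ) + 2) * ((k:ℝ) + (n:ℝ) + 2)) := by
          field_simp
          ring
        linear_combination (((k:ℝ) - (l:ℝ) + 1) / ((k:ℝ) + 2)) * h1
          + M (m + l + 1) (n + k - (m + l)) p * hc
      · have hc : -(((l:ℝ)) + 1) / ((k:ℝ) + 2)
            = -(((m:ℝ) + (l:ℝ)) + 1) / ((n:ℝ) + (k:ℝ) + 2)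
            + (((k:ℝ) + 2) * (m:ℝ) - (n:ℝ) * ((l:ℝ) + 1)) / (((k:ℝ) + 2) * ((k:ℝ) + (n:ℝ) + 2)) := by
          field_simp
          ring
        linear_combination (-(((l:ℝ)) + 1) / ((k:ℝ) + 2)) * h2
          + M (m + l) (n + k - (m + l) + 1) p * hc
end

section
/- For all integers n ≥ 0, k ≥ 0, m with 0 ≤ m ≤ n, and l with 0 ≤ l ≤ k, the Lie bracket of the vector fields B(m,n) and B(l,k) satisfies [B(m,n), B(l,k)] = (k−n)·B(m+l, n+k). (Part of Lemma 2.1.) -/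
/-! `B(l,k) = Z(l,k) • E` with `E(p) = p` the Euler field and `Z(l,k)` homogeneous of
degree `k`. For scalar functions `f, g` one has `[f • E, g • E] = (f · E g - g · E f) • E`,
and Euler's identity `E(Z(l,k)) = k · Z(l,k)` turns this into
`(k - n) · Z(m,n) · Z(l,k) • E = (k - n) • B(m+l, n+k)`. -/

lemma lieBracket_smul_id {f g : ℝ × ℝ → ℝ} {p : ℝ × ℝ} (hf : DifferentiableAt ℝ f p)
    (hg : DifferentiableAt ℝ g p) :
    lieBracket (fun q => f q • q) (fun q => g q • q) p =
      (f p * fderiv ℝ g p p - g p * fderiv ℝ f p p) • p := by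
  have hD {h : ℝ × ℝ → ℝ} (hh : DifferentiableAt ℝ h p) :
      HasFDerivAt (fun q => h q • q) (h p • .id ℝ _ + (fderiv ℝ h p).smulRight p) p :=
    hh.hasFDerivAt.smul (hasFDerivAt_id p)
  rw [lieBracket, (hD hf).fderiv, (hD hg).fderiv]
  simp only [add_apply, smul_apply, ContinuousLinearMap.smulRight_apply,
    ContinuousLinearMap.id_apply, map_smul]
  module

lemma fderiv_monomial_apply_self (i j : ℕ) (p : ℝ × ℝ) :
    fderiv ℝ (fun q : ℝ × ℝ => q.1 ^ i * q.2 ^ j) p p = (i + j) * (p.1 ^ i * p.2 ^ j) := by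
  rw [((hasFDerivAt_fst.pow i).fun_mul (hasFDerivAt_snd.pow j)).fderiv]
  rcases i with _ | i <;> rcases j with _ | j <;> simp [pow_succ] <;> ring

lemma M_of_nonneg {a b : ℤ} (ha : 0 ≤ a) (hb : 0 ≤ b) :
    M a b = fun q => q.1 ^ a.toNat * q.2 ^ b.toNat := by
  funext q
  simp only [M, ha, hb, and_self, if_true]

lemma Z_mul_Z {m n l k : ℤ} (hm : 0 ≤ m) (hmn : m ≤ n) (hl : 0 ≤ l) (hlk : l ≤ k)
    (p : ℝ × ℝ) :
    Z m n p * Z l k p = Z (m + l) (n + k) p := by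
  rw [Z, Z, Z, M_of_nonneg hm (by omega), M_of_nonneg hl (by omega),
    M_of_nonneg (by omega) (by omega), show n + k - (m + l) = (n - m) + (k - l) by ring,
    Int.toNat_add hm hl, Int.toNat_add (by omega) (by omega)]
  ring

lemma B_eq_Z_smul {l k : ℤ} (hl : 0 ≤ l) (hlk : l ≤ k) : B l k = fun q => Z l k q • q := by
  have hkl : 0 ≤ k - l := by omega
  ext q
  · simp only [B, Z, M_of_nonneg hl hkl, M_of_nonneg (by omega : 0 ≤ l + 1) hkl,
      Int.toNat_add hl zero_le_one, Int.toNat_one, pow_succ, Prod.smul_fst, smul_eq_mul]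
    ring
  · simp only [B, Z, M_of_nonneg hl hkl, M_of_nonneg hl (by omega : 0 ≤ k - l + 1),
      Int.toNat_add hkl zero_le_one, Int.toNat_one, pow_succ, Prod.smul_snd, smul_eq_mul]
    ring

lemma fderiv_Z_apply_self {l k : ℤ} (hl : 0 ≤ l) (hlk : l ≤ k) (p : ℝ × ℝ) :
    fderiv ℝ (Z l k) p p = k * Z l k p := by
  have hkl : 0 ≤ k - l := by omega
  have hdeg : ((l.toNat : ℕ) : ℝ) + (k - l).toNat = k := by
    rw [← Int.cast_natCast l.toNat, ← Int.cast_natCast (k - l).toNat, Int.toNat_of_nonneg hl,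
      Int.toNat_of_nonneg hkl]
    push_cast
    ring
  rw [Z, M_of_nonneg hl hkl, fderiv_monomial_apply_self, hdeg]

lemma differentiable_Z (l k : ℤ) : Differentiable ℝ (Z l k) := by
  unfold Z M
  split_ifs <;> fun_prop

theorem stmt1_general (n k m l : ℤ) (hm0 : 0 ≤ m) (hmn : m ≤ n)
    (hl0 : 0 ≤ l) (hlk : l ≤ k) :
    lieBracket (B m n) (B l k) = fun p => ((k : ℝ) - (n : ℝ)) • B (m + l) (n + k) p := by
  funext p
  rw [B_eq_Z_smul hm0 hmn, B_eq_Z_smul hl0 hlk, B_eq_Z_smul (by omega) (by omega),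
    lieBracket_smul_id (differentiable_Z m n p) (differentiable_Z l k p),
    fderiv_Z_apply_self hm0 hmn, fderiv_Z_apply_self hl0 hlk, smul_smul,
    ← Z_mul_Z hm0 hmn hl0 hlk]
  congr 1
  ring

/-- `[B(m,n), B(l,k)] = (k-n) • B(m+l, n+k)`. -/
theorem stmt1 (n k m l : ℤ) (hn : 0 ≤ n) (hk : 0 ≤ k) (hm0 : 0 ≤ m) (hmn : m ≤ n)
    (hl0 : 0 ≤ l) (hlk : l ≤ k) :
    lieBracket (B m n) (B l k) = fun p => ((k : ℝ) - (n : ℝ)) • B (m + l) (n + k) p :=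
  stmt1_general n k m l hm0 hmn hl0 hlk
end

section
/- For all integers n ≥ 0, k ≥ 0, m with −1 ≤ m ≤ n+1, and l with −1 ≤ l ≤ k+1, the Lie bracket of the vector fields A(m,n) and A(l,k) satisfies [A(m,n), A(l,k)] = (n+k+2)·( (l+1)/(k+2) − (m+1)/(n+2) )·A(m+l, n+k). (Part of Lemma 2.1.) -/
section truncPow

variable {𝕜 : Type*}

def truncPow [MonoidWithZero 𝕜] (a : ℤ) (x : 𝕜) : 𝕜 := if 0 ≤ a then x ^ a.toNat else 0

lemma truncPow_add [MonoidWithZero 𝕜] {a c : ℤ} (ha : 0 ≤ a) (hc : 0 ≤ c) (x : 𝕜) :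
    truncPow (a + c) x = truncPow a x * truncPow c x := by
  simp only [truncPow, ha, hc, add_nonneg, if_true, Int.toNat_add ha hc, pow_add]

lemma hasDerivAt_truncPow [NontriviallyNormedField 𝕜] (a : ℤ) (x : 𝕜) :
    HasDerivAt (truncPow a) ((a : 𝕜) * truncPow (a - 1) x) x := by
  rcases lt_or_ge a 1 with ha | ha
  · have hconst : truncPow a = fun _ : 𝕜 => truncPow a x := by
      funext y; unfold truncPow; split_ifs <;> simp [show a.toNat = 0 by omega]
    have hzero : (a : 𝕜) * truncPow (a - 1) x = 0 := by
      rw [truncPow, if_neg (by omega), mul_zero]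
    rw [hzero, hconst]
    exact hasDerivAt_const x _
  · have hpow : truncPow a = fun y : 𝕜 => y ^ a.toNat := by
      funext y; simp [truncPow, show 0 ≤ a by omega]
    have hcast : (a : 𝕜) = a.toNat := by rw [← Int.cast_natCast, Int.toNat_of_nonneg (by omega)]
    rw [hpow, truncPow, if_pos (by omega), show (a - 1).toNat = a.toNat - 1 by omega, hcast]
    exact hasDerivAt_pow a.toNat x

end truncPow

lemma M_eq_truncPow_mul (a b : ℤ) (p : ℝ × ℝ) : M a b p = truncPow a p.1 * truncPow b p.2 := by
  unfold M truncPow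
  split_ifs <;> simp_all

lemma M_mul_M {a b c d : ℤ} (ha : 0 ≤ a) (hb : 0 ≤ b) (hc : 0 ≤ c) (hd : 0 ≤ d) (p : ℝ × ℝ) :
    M a b p * M c d p = M (a + c) (b + d) p := by
  simp only [M_eq_truncPow_mul, truncPow_add ha hc, truncPow_add hb hd]
  ring

lemma hasFDerivAt_M (a b : ℤ) (p : ℝ × ℝ) :
    HasFDerivAt (M a b) ((a * M (a - 1) b p) • ContinuousLinearMap.fst ℝ ℝ ℝ +
      (b * M a (b - 1) p) • ContinuousLinearMap.snd ℝ ℝ ℝ) p := by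
  have hM : M a b = fun q => truncPow a q.1 * truncPow b q.2 := funext (M_eq_truncPow_mul a b)
  have hx : HasFDerivAt (fun q : ℝ × ℝ => truncPow a q.1)
      ((a * truncPow (a - 1) p.1) • ContinuousLinearMap.fst ℝ ℝ ℝ) p :=
    (hasDerivAt_truncPow a p.1).comp_hasFDerivAt p hasFDerivAt_fst
  have hy : HasFDerivAt (fun q : ℝ × ℝ => truncPow b q.2)
      ((b * truncPow (b - 1) p.2) • ContinuousLinearMap.snd ℝ ℝ ℝ) p :=
    (hasDerivAt_truncPow b p.2).comp_hasFDerivAt p hasFDerivAt_snd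
  rw [hM]
  refine (hx.mul hy).congr_fderiv (ContinuousLinearMap.ext fun v => ?_)
  simp only [add_apply, smul_apply, ContinuousLinearMap.coe_fst',
    ContinuousLinearMap.coe_snd', smul_eq_mul, M_eq_truncPow_mul]
  ring

lemma differentiable_M (a b : ℤ) : Differentiable ℝ (M a b) :=
  fun p => (hasFDerivAt_M a b p).differentiableAt

lemma fderiv_M_apply (a b : ℤ) (p v : ℝ × ℝ) :
    fderiv ℝ (M a b) p v = a * M (a - 1) b p * v.1 + b * M a (b - 1) p * v.2 := by
  simp [(hasFDerivAt_M a b p).fderiv]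

/-- The Hamiltonian vector field `(∂H/∂y, -∂H/∂x)` of `H = M a b`. -/
noncomputable def hamiltonianM (a b : ℤ) : ℝ × ℝ → ℝ × ℝ :=
  fun p => ((b : ℝ) * M a (b - 1) p, -((a : ℝ) * M (a - 1) b p))

lemma hasFDerivAt_hamiltonianM (a b : ℤ) (p : ℝ × ℝ) :
    HasFDerivAt (hamiltonianM a b) (((b : ℝ) • fderiv ℝ (M a (b - 1)) p).prod
      (-((a : ℝ) • fderiv ℝ (M (a - 1) b) p))) p :=
  (((differentiable_M _ _ p).hasFDerivAt.const_mul _).prodMk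
    ((differentiable_M _ _ p).hasFDerivAt.const_mul _).neg)

lemma differentiable_hamiltonianM (a b : ℤ) : Differentiable ℝ (hamiltonianM a b) :=
  fun p => (hasFDerivAt_hamiltonianM a b p).differentiableAt

lemma fderiv_hamiltonianM_apply (a b : ℤ) (p v : ℝ × ℝ) :
    fderiv ℝ (hamiltonianM a b) p v =
      ((b : ℝ) * fderiv ℝ (M a (b - 1)) p v, -((a : ℝ) * fderiv ℝ (M (a - 1) b) p v)) := by
  simp [(hasFDerivAt_hamiltonianM a b p).fderiv]

lemma mul_M_mul_M {r : ℤ} {a b c d e f : ℤ} (hac : a + c = e) (hbd : b + d = f)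
    (h : r ≠ 0 → 0 ≤ a ∧ 0 ≤ b ∧ 0 ≤ c ∧ 0 ≤ d) (p : ℝ × ℝ) :
    (r : ℝ) * (M a b p * M c d p) = r * M e f p := by
  rcases eq_or_ne r 0 with hr | hr
  · simp [hr]
  · obtain ⟨ha, hb, hc, hd⟩ := h hr
    rw [M_mul_M ha hb hc hd, hac, hbd]

lemma lieBracket_hamiltonianM {a b c d : ℤ} (ha : 0 ≤ a) (hb : 0 ≤ b) (hc : 0 ≤ c) (hd : 0 ≤ d) :
    lieBracket (hamiltonianM a b) (hamiltonianM c d) =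
      ((b * c - a * d : ℤ) : ℝ) • hamiltonianM (a + c - 1) (b + d - 1) := by
  have factors_ne_zero : ∀ {x y z : ℤ}, x * y * z ≠ 0 → x ≠ 0 ∧ y ≠ 0 ∧ z ≠ 0 := fun h => by
    simp only [ne_eq, mul_eq_zero, not_or] at h; tauto
  funext p
  simp only [lieBracket, fderiv_hamiltonianM_apply, fderiv_M_apply, hamiltonianM]
  ext
  · have h1 : ((d * c * b : ℤ) : ℝ) * (M (c - 1) (d - 1) p * M a (b - 1) p) =
        ((d * c * b : ℤ) : ℝ) * M (a + c - 1) (b + d - 1 - 1) p :=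
      mul_M_mul_M (by ring) (by ring) (fun h => by have := factors_ne_zero h; omega) p
    have h2 : ((d * (d - 1) * a : ℤ) : ℝ) * (M c (d - 1 - 1) p * M (a - 1) b p) =
        ((d * (d - 1) * a : ℤ) : ℝ) * M (a + c - 1) (b + d - 1 - 1) p :=
      mul_M_mul_M (by ring) (by ring) (fun h => by have := factors_ne_zero h; omega) p
    have h3 : ((b * a * d : ℤ) : ℝ) * (M (a - 1) (b - 1) p * M c (d - 1) p) =
        ((b * a * d : ℤ) : ℝ) * M (a + c - 1) (b + d - 1 - 1) p :=
      mul_M_mul_M (by ring) (by ring) (fun h => by have := factors_ne_zero h; omega) p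
    have h4 : ((b * (b - 1) * c : ℤ) : ℝ) * (M a (b - 1 - 1) p * M (c - 1) d p) =
        ((b * (b - 1) * c : ℤ) : ℝ) * M (a + c - 1) (b + d - 1 - 1) p :=
      mul_M_mul_M (by ring) (by ring) (fun h => by have := factors_ne_zero h; omega) p
    simp only [Prod.fst_sub, Pi.smul_apply, Prod.smul_fst, hamiltonianM, smul_eq_mul]
    push_cast at h1 h2 h3 h4 ⊢
    linear_combination h1 - h2 - h3 + h4
  · have h5 : ((c * (c - 1) * b : ℤ) : ℝ) * (M (c - 1 - 1) d p * M a (b - 1) p) =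
        ((c * (c - 1) * b : ℤ) : ℝ) * M (a + c - 1 - 1) (b + d - 1) p :=
      mul_M_mul_M (by ring) (by ring) (fun h => by have := factors_ne_zero h; omega) p
    have h6 : ((c * d * a : ℤ) : ℝ) * (M (c - 1) (d - 1) p * M (a - 1) b p) =
        ((c * d * a : ℤ) : ℝ) * M (a + c - 1 - 1) (b + d - 1) p :=
      mul_M_mul_M (by ring) (by ring) (fun h => by have := factors_ne_zero h; omega) p
    have h7 : ((a * (a - 1) * d : ℤ) : ℝ) * (M (a - 1 - 1) b p * M c (d - 1) p) =
        ((a * (a - 1) * d : ℤ) : ℝ) * M (a + c - 1 - 1) (b + d - 1) p :=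
      mul_M_mul_M (by ring) (by ring) (fun h => by have := factors_ne_zero h; omega) p
    have h8 : ((a * b * c : ℤ) : ℝ) * (M (a - 1) (b - 1) p * M (c - 1) d p) =
        ((a * b * c : ℤ) : ℝ) * M (a + c - 1 - 1) (b + d - 1) p :=
      mul_M_mul_M (by ring) (by ring) (fun h => by have := factors_ne_zero h; omega) p
    simp only [Prod.snd_sub, Pi.smul_apply, Prod.smul_snd, hamiltonianM, smul_eq_mul]
    push_cast at h5 h6 h7 h8 ⊢
    linear_combination -h5 + h6 + h7 - h8

lemma lieBracket_smul_smul {X Y : ℝ × ℝ → ℝ × ℝ} (hX : Differentiable ℝ X)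
    (hY : Differentiable ℝ Y) (s t : ℝ) :
    lieBracket (s • X) (t • Y) = (s * t) • lieBracket X Y := by
  funext p
  simp only [lieBracket, Pi.smul_apply, fderiv_const_smul (hX p), fderiv_const_smul (hY p),
    smul_apply, map_smul, smul_sub, smul_smul, mul_comm s t]

lemma A_eq_smul_hamiltonianM (l k : ℤ) :
    A l k = ((k : ℝ) + 2)⁻¹ • hamiltonianM (l + 1) (k - l + 1) := by
  funext p
  simp only [A, hamiltonianM, Pi.smul_apply, Prod.smul_mk, smul_eq_mul, add_sub_cancel_right]
  push_cast
  ext <;> ring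

/-- `[A(m,n), A(l,k)] = (n+k+2)((l+1)/(k+2) - (m+1)/(n+2)) • A(m+l, n+k)`. -/
theorem stmt2 (n k m l : ℤ) (hn : 0 ≤ n) (hk : 0 ≤ k) (hm : -1 ≤ m) (hmn : m ≤ n + 1)
    (hl : -1 ≤ l) (hlk : l ≤ k + 1) :
    lieBracket (A m n) (A l k) =
      fun p => (((n : ℝ) + (k : ℝ) + 2) *
          (((l : ℝ) + 1) / ((k : ℝ) + 2) - ((m : ℝ) + 1) / ((n : ℝ) + 2))) •
        A (m + l) (n + k) p := by
  have hn' : (0 : ℝ) ≤ n := by exact_mod_cast hn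
  have hk' : (0 : ℝ) ≤ k := by exact_mod_cast hk
  rw [A_eq_smul_hamiltonianM m n, A_eq_smul_hamiltonianM l k,
    lieBracket_smul_smul (differentiable_hamiltonianM _ _) (differentiable_hamiltonianM _ _),
    lieBracket_hamiltonianM (by omega) (by omega) (by omega) (by omega)]
  funext p
  rw [A_eq_smul_hamiltonianM, show m + 1 + (l + 1) - 1 = m + l + 1 by ring,
    show n - m + 1 + (k - l + 1) - 1 = n + k - (m + l) + 1 by ring]
  simp only [Pi.smul_apply, smul_smul]
  congr 1
  push_cast
  field_simp
  ring
end

section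
/- Let r ≥ 1 and n ≥ 1 be integers, a_r a real number, and l ≥ 1 an integer with 2l ≤ n+2. Then A(2l−1, n) + [𝔄(2l−1, n), 𝔸_r] = [ a_r^l · (2l−1)^{l−1}_{−2} · (n + 2 + r·l) / ( (n+2) · (n−2l+3)^{l}_{r+2} ) ] · A(−1, n+l·r), where [·,·] is the Lie bracket of vector fields. (Odd case of the lemma on eliminating A-terms by the homological operator of 𝔸_r.) -/
/-- Pochhammer-type product `(a)^n_b = a (a+b) (a+2b) ⋯ (a+(n-1)b)`. -/
noncomputable def poch (a b : ℝ) (n : ℕ) : ℝ := ∏ j ∈ Finset.range n, (a + (j : ℝ) * b)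

/-- The vector field `𝔸_r = A(1,0) + a_r • A(-1,r)`, i.e. `(a_r y^{r+1}, -x)`. -/
noncomputable def bbA (r : ℤ) (ar : ℝ) : ℝ × ℝ → ℝ × ℝ :=
  fun p => A 1 0 p + ar • A (-1) r p

/-- The vector field `𝔄(m,n)` used to eliminate A-terms. -/
noncomputable def frakA (r : ℤ) (ar : ℝ) (m n : ℤ) : ℝ × ℝ → ℝ × ℝ :=
  fun p => ∑ i ∈ Finset.range ((m / 2).toNat + 1),
    (-(ar ^ i * poch (m : ℝ) (-2) i * ((n : ℝ) + (i : ℝ) * (r : ℝ) + 2)) /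
      (((n : ℝ) + 2) * poch ((n : ℝ) - (m : ℝ) + 2) ((r : ℝ) + 2) (i + 1))) •
    A (m - (2 * (i : ℤ) + 1)) (n + (i : ℤ) * r) p

/-!
Bracketing with `𝔸_r = (a_r y^{r+1}, -x)` sends `A(m,k)` to `(k-m+1) A(m+1,k)` minus a multiple of
`A(m-1,k+r)`. The coefficients of `𝔄(m,n)` are chosen so that the brackets of its consecutive terms
telescope: the `i`-th one contributes `g_i A(m-2i, n+ir) - g_{i+1} A(m-2i-2, n+(i+1)r)`, and
`g_0 = -1` cancels `A(m,n)`. For odd `m = 2l-1` the sum stops after `l` terms and what survives is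
`-g_l A(-1, n+lr)`.
-/

open ContinuousLinearMap

@[simp] theorem M_natCast (a b : ℕ) (p : ℝ × ℝ) : M a b p = p.1 ^ a * p.2 ^ b := by
  simp [M]

theorem M_eq_zero_of_neg {a b : ℤ} (h : a < 0 ∨ b < 0) : M a b = 0 := by
  funext p
  simp only [M, Pi.zero_apply, ite_eq_right_iff]
  omega

theorem M_mul_fst {a : ℤ} (ha : 0 ≤ a) (b : ℤ) (p : ℝ × ℝ) : M a b p * p.1 = M (a + 1) b p := by
  rcases lt_or_ge b 0 with hb | hb
  · simp [M_eq_zero_of_neg (Or.inr hb)]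
  lift a to ℕ using ha
  lift b to ℕ using hb
  rw [show (a : ℤ) + 1 = ((a + 1 : ℕ) : ℤ) by push_cast; rfl, M_natCast, M_natCast]
  ring

theorem M_mul_pow_snd (a : ℤ) {b : ℤ} (hb : 0 ≤ b) (s : ℕ) (p : ℝ × ℝ) :
    M a b p * p.2 ^ s = M a (b + s) p := by
  rcases lt_or_ge a 0 with ha | ha
  · simp [M_eq_zero_of_neg (Or.inl ha)]
  lift a to ℕ using ha
  lift b to ℕ using hb
  rw [show (b : ℤ) + s = ((b + s : ℕ) : ℤ) by push_cast; rfl, M_natCast, M_natCast]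
  ring

theorem natCast_mul_M_sub_one_left (a b : ℕ) (p : ℝ × ℝ) :
    (a : ℝ) * M ((a : ℤ) - 1) b p = a * (p.1 ^ (a - 1) * p.2 ^ b) := by
  cases a with
  | zero => simp
  | succ a => simp

theorem natCast_mul_M_sub_one_right (a b : ℕ) (p : ℝ × ℝ) :
    (b : ℝ) * M a ((b : ℤ) - 1) p = b * (p.1 ^ a * p.2 ^ (b - 1)) := by
  cases b with
  | zero => simp
  | succ b => simp

noncomputable def dM (a b : ℤ) (p : ℝ × ℝ) : ℝ × ℝ →L[ℝ] ℝ :=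
  ((a : ℝ) * M (a - 1) b p) • fst ℝ ℝ ℝ + ((b : ℝ) * M a (b - 1) p) • snd ℝ ℝ ℝ

/-- No sign condition is needed: for a negative exponent both sides vanish. -/
theorem hasFDerivAt_M_s5 (a b : ℤ) (p : ℝ × ℝ) : HasFDerivAt (M a b) (dM a b p) p := by
  by_cases h : 0 ≤ a ∧ 0 ≤ b
  · obtain ⟨ha, hb⟩ := h
    lift a to ℕ using ha
    lift b to ℕ using hb
    have hM : M a b = fun q => q.1 ^ a * q.2 ^ b := funext (M_natCast a b)
    rw [hM]
    have hx : HasFDerivAt (fun q : ℝ × ℝ => q.1 ^ a) ((a * p.1 ^ (a - 1)) • fst ℝ ℝ ℝ) p :=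
      (hasDerivAt_pow a p.1).comp_hasFDerivAt p hasFDerivAt_fst
    have hy : HasFDerivAt (fun q : ℝ × ℝ => q.2 ^ b) ((b * p.2 ^ (b - 1)) • snd ℝ ℝ ℝ) p :=
      (hasDerivAt_pow b p.2).comp_hasFDerivAt p hasFDerivAt_snd
    refine (hx.mul hy).congr_fderiv ?_
    simp only [dM, Int.cast_natCast, natCast_mul_M_sub_one_left, natCast_mul_M_sub_one_right]
    module
  · have hd : dM a b p = 0 := by
      simp [dM, M_eq_zero_of_neg (show a - 1 < 0 ∨ b < 0 by omega), M_eq_zero_of_neg (show a < 0 ∨ b - 1 < 0 by omega)]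
    rw [M_eq_zero_of_neg (by omega), hd]
    exact hasFDerivAt_const 0 p

theorem hasFDerivAt_A (l k : ℤ) (p : ℝ × ℝ) :
    HasFDerivAt (A l k) (((((k : ℝ) - l + 1) / (k + 2)) • dM (l + 1) (k - l) p).prod
      ((-(((l : ℝ) + 1) / (k + 2))) • dM l (k - l + 1) p)) p :=
  ((hasFDerivAt_M_s5 _ _ p).const_mul _).prodMk ((hasFDerivAt_M_s5 _ _ p).const_mul _)

theorem differentiable_A (l k : ℤ) : Differentiable ℝ (A l k) :=
  fun p => (hasFDerivAt_A l k p).differentiableAt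

theorem bbA_natCast (ρ : ℕ) (ar : ℝ) : bbA ρ ar = fun p => (ar * p.2 ^ (ρ + 1), -p.1) := by
  funext p
  have : (ρ : ℝ) + 2 ≠ 0 := by positivity
  simp [bbA, A, M, show (ρ : ℝ) + 1 + 1 = ρ + 2 by ring, this, show (0 : ℤ) ≤ ρ + 1 by omega]

theorem hasFDerivAt_bbA (ρ : ℕ) (ar : ℝ) (p : ℝ × ℝ) :
    HasFDerivAt (bbA ρ ar) (((ar * (ρ + 1) * p.2 ^ ρ) • snd ℝ ℝ ℝ).prod (-fst ℝ ℝ ℝ)) p := by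
  rw [bbA_natCast]
  have hy : HasFDerivAt (fun q : ℝ × ℝ => q.2 ^ (ρ + 1)) (((ρ + 1 : ℕ) * p.2 ^ ρ) • snd ℝ ℝ ℝ) p :=
    (hasDerivAt_pow (ρ + 1) p.2).comp_hasFDerivAt p hasFDerivAt_snd
  refine ((hy.const_mul ar).prodMk hasFDerivAt_fst.neg).congr_fderiv ?_
  ext <;> simp [mul_assoc]

theorem lieBracket_A_bbA {m k r : ℤ} (hm : 0 ≤ m) (hmk : m ≤ k) (hr : 0 ≤ r) (ar : ℝ)
    (p : ℝ × ℝ) :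
    lieBracket (A m k) (bbA r ar) p = ((k : ℝ) - m + 1) • A (m + 1) k p
      - (ar * (m + 1) * (k + r + 2) / (k + 2)) • A (m - 1) (k + r) p := by
  lift r to ℕ using hr
  have hk : (0 : ℝ) ≤ k := by exact_mod_cast hm.trans hmk
  have hk2 : (k : ℝ) + 2 ≠ 0 := by positivity
  have hkr2 : (k : ℝ) + r + 2 ≠ 0 := by positivity
  have h1 : M m (k - m + 1) p * p.2 ^ r = M m (k + r - (m - 1)) p := by
    rw [M_mul_pow_snd _ (by omega)]; ring_nf
  have h2 : M m (k - m) p * p.2 ^ (r + 1) = M m (k + r - (m - 1)) p := by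
    rw [M_mul_pow_snd _ (by omega)]; push_cast; ring_nf
  have h3 : M (m + 1) (k - m - 1) p * p.1 = M (m + 1 + 1) (k - (m + 1)) p := by
    rw [M_mul_fst (by omega)]; ring_nf
  have h4 : M (m - 1) (k - m + 1) p * p.2 ^ (r + 1) = M (m - 1) (k + r - (m - 1) + 1) p := by
    rw [M_mul_pow_snd _ (by omega)]; push_cast; ring_nf
  have h5 : M m (k - m) p * p.1 = M (m + 1) (k - (m + 1) + 1) p := by
    rw [M_mul_fst hm]; ring_nf
  have h6 : M (m + 1) (k - m) p = M (m + 1) (k - (m + 1) + 1) p := by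
    ring_nf
  rw [lieBracket, (hasFDerivAt_A m k p).fderiv, (hasFDerivAt_bbA r ar p).fderiv, bbA_natCast]
  simp only [A, dM]
  ext <;> simp only [neg_mul, ContinuousLinearMap.prod_apply, smul_apply, coe_snd', smul_eq_mul,
    mul_neg, neg_apply, coe_fst', Int.cast_add, Int.cast_one, add_sub_cancel_right, Int.cast_sub,
    smul_add, neg_smul, add_apply, neg_neg, Prod.mk_sub_mk, Prod.smul_mk, Int.cast_natCast,
    sub_add_cancel, sub_neg_eq_add]
  · linear_combination (norm := (field_simp; ring))
      (-(ar * (r + 1) * (m + 1) / (k + 2))) * h1 - ((k - m + 1) / (k + 2) * (m + 1) * ar) * h2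
      + ((k - m + 1) / (k + 2) * (k - m)) * h3
  · linear_combination (norm := (field_simp; ring))
      ((m + 1) / (k + 2) * m * ar) * h4 - ((m + 1) / (k + 2) * (k - m + 1)) * h5
      - ((k - m + 1) / (k + 2)) * h6

theorem lieBracket_sum_smul_left {ι : Type*} (s : Finset ι) (c : ι → ℝ)
    (V : ι → ℝ × ℝ → ℝ × ℝ) (X : ℝ × ℝ → ℝ × ℝ) {p : ℝ × ℝ}
    (hV : ∀ i ∈ s, DifferentiableAt ℝ (V i) p) :
    lieBracket (fun q => ∑ i ∈ s, c i • V i q) X p = ∑ i ∈ s, c i • lieBracket (V i) X p := by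
  have hcV : ∀ i ∈ s, DifferentiableAt ℝ (fun q => c i • V i q) p :=
    fun i hi => (hV i hi).const_smul (c i)
  simp only [lieBracket, fderiv_fun_sum hcV, sum_apply, map_sum,
    ← Finset.sum_sub_distrib, smul_sub]
  refine Finset.sum_congr rfl fun i hi => ?_
  rw [fderiv_fun_const_smul (hV i hi), smul_apply, map_smul]

theorem poch_succ (a b : ℝ) (n : ℕ) : poch a b (n + 1) = poch a b n * (a + n * b) :=
  Finset.prod_range_succ _ n

theorem poch_pos {a b : ℝ} (ha : 0 < a) (hb : 0 ≤ b) (n : ℕ) : 0 < poch a b n :=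
  Finset.prod_pos fun j _ => by positivity

/-- The `g_i` of the telescoping: the `i`-th coefficient of `𝔄(m,n)` times the last factor
`n - m + 2 + i(r+2)` of its Pochhammer denominator. -/
noncomputable def elimCoeff (r : ℤ) (ar : ℝ) (m n : ℤ) (i : ℕ) : ℝ :=
  -(ar ^ i * poch m (-2) i * (n + i * r + 2)) / ((n + 2) * poch (n - m + 2) (r + 2) i)

theorem elimCoeff_zero (r : ℤ) (ar : ℝ) (m : ℤ) {n : ℤ} (hn : (n : ℝ) + 2 ≠ 0) :
    elimCoeff r ar m n 0 = -1 := by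
  simp only [elimCoeff, poch, Finset.prod_range_zero, pow_zero, Nat.cast_zero, zero_mul, add_zero,
    one_mul, mul_one, neg_div, div_self hn]

theorem smul_lieBracket_A_bbA_eq_sub {r m n : ℤ} (ar : ℝ) {i : ℕ} (hr : 0 ≤ r)
    (hi : 2 * (i : ℤ) + 1 ≤ m) (hmn : m ≤ n + 1) (p : ℝ × ℝ) :
    (-(ar ^ i * poch (m : ℝ) (-2) i * ((n : ℝ) + (i : ℝ) * (r : ℝ) + 2)) /
      (((n : ℝ) + 2) * poch ((n : ℝ) - (m : ℝ) + 2) ((r : ℝ) + 2) (i + 1))) •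
        lieBracket (A (m - (2 * (i : ℤ) + 1)) (n + (i : ℤ) * r)) (bbA r ar) p
      = elimCoeff r ar m n i • A (m - 2 * (i : ℤ)) (n + (i : ℤ) * r) p
        - elimCoeff r ar m n (i + 1) • A (m - 2 * ((i + 1 : ℕ) : ℤ)) (n + ((i + 1 : ℕ) : ℤ) * r) p := by
  have hr' : (0 : ℝ) ≤ r := by exact_mod_cast hr
  have hi' : (2 * i + 1 : ℝ) ≤ m := by exact_mod_cast hi
  have hmn' : (m : ℝ) ≤ n + 1 := by exact_mod_cast hmn
  have hn : (0 : ℝ) < n + 2 := by linarith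
  have hnm : (0 : ℝ) < n - m + 2 := by linarith
  have hpoch := poch_pos hnm (by linarith : (0 : ℝ) ≤ r + 2) i
  have hlast : (0 : ℝ) < n - m + 2 + i * (r + 2) := by positivity
  have hnir : (0 : ℝ) < n + i * r + 2 := by nlinarith
  rw [lieBracket_A_bbA (by omega) (by nlinarith) hr, smul_sub, smul_smul, smul_smul,
    show m - (2 * i + 1) + 1 = m - 2 * i by ring,
    show m - (2 * i + 1) - 1 = m - 2 * ((i + 1 : ℕ) : ℤ) by push_cast; ring,
    show n + i * r + r = n + ((i + 1 : ℕ) : ℤ) * r by push_cast; ring]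
  congr 2
  · rw [elimCoeff, poch_succ]
    push_cast
    field_simp
    ring
  · rw [elimCoeff, poch_succ, poch_succ]
    push_cast
    field_simp
    ring

theorem A_add_lieBracket_sum_eq_smul {r m n : ℤ} (ar : ℝ) {L : ℕ} (hr : 0 ≤ r) (hm : 0 ≤ m)
    (hL : 2 * (L : ℤ) ≤ m + 1) (hmn : m ≤ n + 1) (p : ℝ × ℝ) :
    A m n p + lieBracket (fun q => ∑ i ∈ Finset.range L,
        (-(ar ^ i * poch (m : ℝ) (-2) i * ((n : ℝ) + (i : ℝ) * (r : ℝ) + 2)) /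
          (((n : ℝ) + 2) * poch ((n : ℝ) - (m : ℝ) + 2) ((r : ℝ) + 2) (i + 1))) •
        A (m - (2 * (i : ℤ) + 1)) (n + (i : ℤ) * r) q) (bbA r ar) p
      = -elimCoeff r ar m n L • A (m - 2 * (L : ℤ)) (n + (L : ℤ) * r) p := by
  have hn : (n : ℝ) + 2 ≠ 0 := by
    have : (0 : ℝ) ≤ n + 1 := by exact_mod_cast hm.trans hmn
    linarith
  rw [lieBracket_sum_smul_left _ _ _ _ fun i _ => (differentiable_A _ _).differentiableAt,
    Finset.sum_congr rfl fun i hi =>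
      smul_lieBracket_A_bbA_eq_sub ar hr (by have := Finset.mem_range.mp hi; omega) hmn p,
    Finset.sum_range_sub' (fun i => elimCoeff r ar m n i • A (m - 2 * (i : ℤ)) (n + (i : ℤ) * r) p),
    elimCoeff_zero r ar m hn]
  simp only [Nat.cast_zero, mul_zero, zero_mul, sub_zero, add_zero, neg_smul, one_smul]
  abel

theorem neg_elimCoeff_two_mul_sub_one (r : ℤ) (ar : ℝ) (n : ℤ) {l : ℕ} (hl : 1 ≤ l) :
    -elimCoeff r ar (2 * l - 1) n l
      = ar ^ l * poch (2 * (l : ℝ) - 1) (-2) (l - 1) * ((n : ℝ) + 2 + (r : ℝ) * (l : ℝ)) /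
          (((n : ℝ) + 2) * poch ((n : ℝ) - 2 * (l : ℝ) + 3) ((r : ℝ) + 2) l) := by
  obtain ⟨k, rfl⟩ : ∃ k, l = k + 1 := ⟨l - 1, by omega⟩
  rw [elimCoeff, poch_succ, Nat.add_sub_cancel]
  push_cast
  rw [show (n : ℝ) - (2 * (k + 1) - 1) + 2 = n - 2 * (k + 1) + 3 by ring]
  ring

theorem stmt5_general (r n : ℤ) (ar : ℝ) (l : ℕ) (hr : 1 ≤ r) (hl : 1 ≤ l)
    (hln : 2 * (l : ℤ) ≤ n + 2) :
    (fun p => A (2 * (l : ℤ) - 1) n p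
        + lieBracket (frakA r ar (2 * (l : ℤ) - 1) n) (bbA r ar) p)
      = fun p =>
        (ar ^ l * poch (2 * (l : ℝ) - 1) (-2) (l - 1) * ((n : ℝ) + 2 + (r : ℝ) * (l : ℝ)) /
          (((n : ℝ) + 2) * poch ((n : ℝ) - 2 * (l : ℝ) + 3) ((r : ℝ) + 2) l)) •
        A (-1) (n + (l : ℤ) * r) p := by
  funext p
  have hterms : ((2 * (l : ℤ) - 1) / 2).toNat + 1 = l := by omega
  unfold frakA
  rw [hterms, A_add_lieBracket_sum_eq_smul ar (by omega) (by omega) (by omega) (by omega) p,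
    ← neg_elimCoeff_two_mul_sub_one r ar n hl, show 2 * (l : ℤ) - 1 - 2 * l = -1 by ring]

/-- Odd case: `A(2l-1,n) + [𝔄(2l-1,n), 𝔸_r]` is a multiple of `A(-1, n+lr)`. -/
theorem stmt5 (r n : ℤ) (ar : ℝ) (l : ℕ) (hr : 1 ≤ r) (hn : 1 ≤ n) (hl : 1 ≤ l)
    (hln : 2 * (l : ℤ) ≤ n + 2) :
    (fun p => A (2 * (l : ℤ) - 1) n p
        + lieBracket (frakA r ar (2 * (l : ℤ) - 1) n) (bbA r ar) p)
      = fun p =>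
        (ar ^ l * poch (2 * (l : ℝ) - 1) (-2) (l - 1) * ((n : ℝ) + 2 + (r : ℝ) * (l : ℝ)) /
          (((n : ℝ) + 2) * poch ((n : ℝ) - 2 * (l : ℝ) + 3) ((r : ℝ) + 2) l)) •
        A (-1) (n + (l : ℤ) * r) p :=
  stmt5_general r n ar l hr hl hln
end

section
/- For every integer k ≥ 0, every real number c, and every (x,y) ∈ ℝ², the secondary shift of coordinates expands B(0,k) as: B(0,k)(x, y+c) = Σ_{i=0}^{k} C(k,i)·c^i·B(0,k−i)(x,y) + Σ_{i=1}^{k} C(k,i−1)·c^i·( ((k−i+1)/(k−i+2))·B(0,k−i)(x,y) − A(0,k−i)(x,y) ) − c^{k+1}·A(0,−1)(x,y), where C(k,i) denotes the binomial coefficient and A(0,−1) is the constant vector field (0,−1). -/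
theorem sum_Icc_one_eq_sum_range_succ {M : Type*} [AddCommMonoid M] (f : ℕ → M) (n : ℕ) :
    ∑ i ∈ Finset.Icc 1 n, f i = ∑ j ∈ Finset.range n, f (j + 1) := by
  rw [← Finset.Ico_add_one_right_eq_Icc, Finset.sum_Ico_eq_sum_range, Nat.add_sub_cancel]
  simp only [add_comm 1]

theorem add_pow_succ_eq_sum_choose_add_sum_choose_pred {R : Type*} [CommSemiring R]
    (k : ℕ) (y c : R) :
    (y + c) ^ (k + 1) =
      ∑ i ∈ Finset.range (k + 1), (k.choose i : R) * c ^ i * y ^ (k - i + 1)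
      + ∑ i ∈ Finset.Icc 1 k, (k.choose (i - 1) : R) * c ^ i * y ^ (k - i + 1)
      + c ^ (k + 1) := by
  have hy : y * (y + c) ^ k =
      ∑ i ∈ Finset.range (k + 1), (k.choose i : R) * c ^ i * y ^ (k - i + 1) := by
    rw [add_comm y c, add_pow, Finset.mul_sum]
    exact Finset.sum_congr rfl fun i _ => by ring
  have hc : c * (y + c) ^ k =
      ∑ i ∈ Finset.Icc 1 k, (k.choose (i - 1) : R) * c ^ i * y ^ (k - i + 1) + c ^ (k + 1) := by
    rw [sum_Icc_one_eq_sum_range_succ, add_comm y c, add_pow, Finset.mul_sum,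
      Finset.sum_range_succ _ k, Nat.choose_self, Nat.sub_self]
    refine congrArg₂ (· + ·) (Finset.sum_congr rfl fun i hi => ?_) (by ring)
    have hik : k - (i + 1) + 1 = k - i := by
      have := Finset.mem_range.mp hi
      omega
    rw [Nat.add_sub_cancel, hik]
    ring
  rw [pow_succ, mul_comm, add_mul, hy, hc, add_assoc]

theorem B_zero_natCast_apply (n : ℕ) (p : ℝ × ℝ) :
    B 0 n p = (p.1 * p.2 ^ n, p.2 ^ (n + 1)) := by
  simp [B, M]
  omega

theorem A_zero_natCast_apply (n : ℕ) (p : ℝ × ℝ) :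
    A 0 n p =
      (((n : ℝ) + 1) / ((n : ℝ) + 2) * (p.1 * p.2 ^ n), -(1 / ((n : ℝ) + 2)) * p.2 ^ (n + 1)) := by
  simp [A, M]
  omega

theorem A_zero_neg_one_apply (p : ℝ × ℝ) : A 0 (-1) p = (0, -1) := by
  norm_num [A, M]

theorem smul_B_zero_sub_A_zero (n : ℕ) (p : ℝ × ℝ) :
    (((n : ℝ) + 1) / ((n : ℝ) + 2)) • B 0 n p - A 0 n p = (0, p.2 ^ (n + 1)) := by
  have hn : (n : ℝ) + 2 ≠ 0 := by positivity
  rw [B_zero_natCast_apply, A_zero_natCast_apply, Prod.smul_mk, Prod.mk_sub_mk, smul_eq_mul,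
    smul_eq_mul]
  congr 1
  · ring
  · field_simp
    ring

/-- Secondary shift of coordinates expansion of `B(0,k)`. -/
theorem stmt12 (k : ℕ) (c x y : ℝ) :
    B 0 (k : ℤ) (x, y + c) =
      (∑ i ∈ Finset.range (k + 1),
        ((k.choose i : ℝ) * c ^ i) • B 0 ((k : ℤ) - (i : ℤ)) (x, y))
      + (∑ i ∈ Finset.Icc 1 k,
        ((k.choose (i - 1) : ℝ) * c ^ i) •
          ((((k : ℝ) - (i : ℝ) + 1) / ((k : ℝ) - (i : ℝ) + 2)) •
              B 0 ((k : ℤ) - (i : ℤ)) (x, y)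
            - A 0 ((k : ℤ) - (i : ℤ)) (x, y)))
      - c ^ (k + 1) • A 0 (-1) (x, y) := by
  have hB : ∀ i ∈ Finset.range (k + 1),
      ((k.choose i : ℝ) * c ^ i) • B 0 ((k : ℤ) - (i : ℤ)) (x, y)
        = ((k.choose i : ℝ) * c ^ i) • (x * y ^ (k - i), y ^ (k - i + 1)) := by
    intro i hi
    have hik : i ≤ k := Nat.lt_succ_iff.mp (Finset.mem_range.mp hi)
    rw [← Nat.cast_sub hik, B_zero_natCast_apply]
  have hBA : ∀ i ∈ Finset.Icc 1 k,
      ((k.choose (i - 1) : ℝ) * c ^ i) •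
        ((((k : ℝ) - (i : ℝ) + 1) / ((k : ℝ) - (i : ℝ) + 2)) • B 0 ((k : ℤ) - (i : ℤ)) (x, y)
          - A 0 ((k : ℤ) - (i : ℤ)) (x, y))
      = ((k.choose (i - 1) : ℝ) * c ^ i) • ((0 : ℝ), y ^ (k - i + 1)) := by
    intro i hi
    have hik : i ≤ k := (Finset.mem_Icc.mp hi).2
    rw [← Nat.cast_sub hik, ← Nat.cast_sub hik, smul_B_zero_sub_A_zero]
  rw [Finset.sum_congr rfl hB, Finset.sum_congr rfl hBA, B_zero_natCast_apply,
    A_zero_neg_one_apply]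
  ext
  · simp only [Prod.fst_sub, Prod.fst_add, Prod.fst_sum, Prod.smul_fst, smul_eq_mul, mul_zero,
      Finset.sum_const_zero, add_zero, sub_zero]
    rw [add_comm y c, add_pow, Finset.mul_sum]
    exact Finset.sum_congr rfl fun i _ => by ring
  · simp only [Prod.snd_sub, Prod.snd_add, Prod.snd_sum, Prod.smul_snd, smul_eq_mul, mul_neg,
      mul_one, sub_neg_eq_add]
    rw [add_pow_succ_eq_sum_choose_add_sum_choose_pred]
end

section
/- For all real numbers γ0 and b1, the first-order Melnikov integral along the homoclinic loop of the cusp normal form (with a1 = 1) evaluates as: ∫_{−1}^{2} [ y(1−y)(γ0 + b1·y)/√((2/3)(2−y)) − (y+1)(γ0 + b1·y)·√((2/3)(2−y)) ] dy = −(24√2/5)·γ0 − (36√2/7)·b1. -/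
/-!
Since `p / √u - q * √u = (p - q u) / √u`, the integrand is `Q y / √u` with `u = (2/3)(2 - y)` and
`Q` a cubic. It has the elementary antiderivative `R y * √u`, where the cubic `R` solves
`u R' - R / 3 = Q`; the singularity at `y = 2` is integrable, and the antiderivative vanishes there,
so the integral is `-R (-1) * √2`.
-/

open MeasureTheory intervalIntegral

lemma rpow_neg_one_half_eq_inv_sqrt (t : ℝ) : t ^ (-(1 / 2) : ℝ) = (√t)⁻¹ := by
  rcases lt_or_ge t 0 with ht | ht
  · rw [Real.rpow_def_of_neg ht, Real.sqrt_eq_zero'.2 ht.le, inv_zero,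
      show (-(1 / 2) : ℝ) * Real.pi = -(Real.pi / 2) by ring, Real.cos_neg,
      Real.cos_pi_div_two, mul_zero]
  · rw [Real.sqrt_eq_rpow, ← Real.rpow_neg ht]

-- No positivity hypothesis: for `u ≤ 0` both sides vanish since `√u = 0`.
lemma div_sqrt_sub_mul_sqrt (p q u : ℝ) : p / √u - q * √u = (p - q * u) / √u := by
  rcases le_or_gt u 0 with hu | hu
  · simp [Real.sqrt_eq_zero'.2 hu]
  · have hs : √u ≠ 0 := (Real.sqrt_pos.2 hu).ne'
    field_simp
    rw [Real.sq_sqrt hu.le]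
    ring

lemma intervalIntegrable_div_sqrt_const_mul_sub {g : ℝ → ℝ} (hg : Continuous g) (a b c : ℝ) :
    IntervalIntegrable (fun y => g y / √(c * (b - y))) volume a b := by
  rcases eq_or_ne c 0 with rfl | hc
  · simp
  have hrpow : IntervalIntegrable (fun y => (c * (b - y)) ^ (-(1 / 2) : ℝ)) volume a b := by
    have h := ((intervalIntegrable_rpow' (r := -(1 / 2)) (a := c * (b - a)) (b := c * (b - b))
      (by norm_num)).comp_mul_left (c := c)).comp_sub_left b
    simpa [hc] using h
  have hfun : (fun y => g y / √(c * (b - y))) = fun y => g y * (c * (b - y)) ^ (-(1 / 2) : ℝ) := by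
    funext y
    rw [rpow_neg_one_half_eq_inv_sqrt, div_eq_mul_inv]
  rw [hfun]
  exact hrpow.continuousOn_mul hg.continuousOn

lemma hasDerivAt_mul_sqrt_const_mul_sub {R : ℝ → ℝ} {R' c b x : ℝ} (hR : HasDerivAt R R' x)
    (hx : 0 < c * (b - x)) :
    HasDerivAt (fun y => R y * √(c * (b - y)))
      ((R' * (c * (b - x)) - c / 2 * R x) / √(c * (b - x))) x := by
  have hu : HasDerivAt (fun y => c * (b - y)) (-c) x := by
    simpa using ((hasDerivAt_id x).const_sub b).const_mul c
  refine (hR.mul (hu.sqrt hx.ne')).congr_deriv ?_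
  rw [show R' * (c * (b - x)) - c / 2 * R x = -(c / 2 * R x) - -R' * (c * (b - x)) by ring,
    ← div_sqrt_sub_mul_sqrt]
  ring

/-- First-order Melnikov integral along the homoclinic loop (case `r = s = 1`, `a₁ = 1`). -/
theorem stmt13 (γ0 b1 : ℝ) :
    (∫ y in (-1 : ℝ)..2,
        (y * (1 - y) * (γ0 + b1 * y) / Real.sqrt ((2 / 3) * (2 - y))
          - (y + 1) * (γ0 + b1 * y) * Real.sqrt ((2 / 3) * (2 - y))))
      = -(24 * Real.sqrt 2 / 5) * γ0 - (36 * Real.sqrt 2 / 7) * b1 := by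
  set Q : ℝ → ℝ := fun y => (y * (1 - y) - (y + 1) * (2 / 3 * (2 - y))) * (γ0 + b1 * y)
  set R : ℝ → ℝ := fun y => b1 / 7 * y ^ 3 + (b1 / 7 + γ0 / 5) * y ^ 2
    + (12 * b1 / 7 + γ0 / 5) * y + (48 * b1 / 7 + 24 * γ0 / 5)
  have hR (x : ℝ) : HasDerivAt R (3 * (b1 / 7) * x ^ 2 + 2 * (b1 / 7 + γ0 / 5) * x
      + (12 * b1 / 7 + γ0 / 5)) x := by
    have h := (((((hasDerivAt_pow 3 x).const_mul (b1 / 7)).add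
      ((hasDerivAt_pow 2 x).const_mul (b1 / 7 + γ0 / 5))).add
      ((hasDerivAt_id x).const_mul (12 * b1 / 7 + γ0 / 5))).add_const
      (48 * b1 / 7 + 24 * γ0 / 5))
    exact h.congr_deriv (by push_cast; ring)
  rw [integral_congr (g := fun y => Q y / √(2 / 3 * (2 - y)))
    (fun y _ => by simp only [Q]; rw [div_sqrt_sub_mul_sqrt]; ring),
    integral_eq_sub_of_hasDerivAt_of_le (f := fun y => R y * √(2 / 3 * (2 - y)))
    (by norm_num) (by fun_prop) (fun x hx => ?deriv)
    (intervalIntegrable_div_sqrt_const_mul_sub (g := Q) (by fun_prop) _ _ _)]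
  · norm_num [R]
    ring
  · refine (hasDerivAt_mul_sqrt_const_mul_sub (hR x)
      (mul_pos (by norm_num : (0 : ℝ) < 2 / 3) (sub_pos.2 hx.2))).congr_deriv ?_
    simp only [Q, R]
    ring
end

section
/- For all real numbers γ3, γ4 and b2, the first-order Melnikov integral along the heteroclinic loop of the Z2-equivariant cusp normal form (with a2 = 1) evaluates, for both choices of sign, as: ∫_{0}^{±√2} [ 2(1−y²)(γ4·y² + γ3·y + b2·y³)/√(4−2y²) − (1/2)·y·√(4−2y²)·(γ4·y + γ3 + b2·y²) ] dy = −( ±(3√2π/8)·γ4 + (32/15)·b2 + (4/3)·γ3 ); equivalently, ∫_{√2}^{0} (same integrand) dy = (3√2π/8)·γ4 + (32/15)·b2 + (4/3)·γ3 and ∫_{−√2}^{0} (same integrand) dy = −(3√2π/8)·γ4 + (32/15)·b2 + (4/3)·γ3. -/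
/-!
Since `(√(4 - 2y²))² = 4 - 2y²`, the integrand collapses to
`-(γ4 y⁴ + γ3 y³ + b2 y⁵) / √(4 - 2y²)`, so everything reduces to the moments
`∫₀^√2 yⁿ / √(4 - 2y²)`. The substitution `y = √2 sin θ` turns these into
`(√2)ⁿ⁺¹ / 2 · ∫₀^{π/2} sinⁿ θ`, evaluated by the Wallis reduction formula. The change of
variables is done on the open interval `(0, π/2)` for injective maps, which asks nothing of the
integrand at the singular endpoint and yields its integrability at the same time. Reflecting
`y ↦ -y` flips the sign of the `γ4` term only, which gives the second integral.
-/

open Real MeasureTheory Set intervalIntegral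

section ArcsineSubstitution

variable {r : ℝ}

lemma strictMonoOn_const_mul_sin (hr : 0 < r) :
    StrictMonoOn (fun θ => r * sin θ) (Icc 0 (π / 2)) := fun x hx y hy hxy =>
  have hsub : Icc 0 (π / 2) ⊆ Icc (-(π / 2)) (π / 2) :=
    Icc_subset_Icc (by linarith [pi_pos]) le_rfl
  mul_lt_mul_of_pos_left (strictMonoOn_sin (hsub hx) (hsub hy) hxy) hr

lemma image_const_mul_sin_Ioo (hr : 0 < r) :
    (fun θ => r * sin θ) '' Ioo 0 (π / 2) = Ioo 0 r := by
  rw [(Continuous.continuousOn (by fun_prop)).image_Ioo_of_strictMonoOn (by positivity)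
    (strictMonoOn_const_mul_sin hr)]
  simp

lemma abs_mul_cos_mul_pow_div_sqrt_sq_sub_sq (hr : 0 < r) (n : ℕ) {θ : ℝ}
    (hθ : θ ∈ Ioo 0 (π / 2)) :
    |r * cos θ| * ((r * sin θ) ^ n / √(r ^ 2 - (r * sin θ) ^ 2)) = r ^ n * sin θ ^ n := by
  have hcos : 0 < cos θ := cos_pos_of_mem_Ioo ⟨by linarith [hθ.1, pi_pos], hθ.2⟩
  have hsqrt : √(r ^ 2 - (r * sin θ) ^ 2) = r * cos θ := by
    rw [← sqrt_sq (by positivity : 0 ≤ r * cos θ)]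
    congr 1
    linear_combination -r ^ 2 * sin_sq_add_cos_sq θ
  rw [hsqrt, abs_of_pos (by positivity)]
  field_simp
  ring

lemma integrableOn_pow_div_sqrt_sq_sub_sq (hr : 0 < r) (n : ℕ) :
    IntegrableOn (fun y => y ^ n / √(r ^ 2 - y ^ 2)) (Ioo 0 r) := by
  rw [← image_const_mul_sin_Ioo hr,
    integrableOn_image_iff_integrableOn_abs_deriv_smul measurableSet_Ioo
      (fun θ _ => ((hasDerivAt_sin θ).const_mul r).hasDerivWithinAt)
      ((strictMonoOn_const_mul_sin hr).injOn.mono Ioo_subset_Icc_self)]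
  refine ((by fun_prop : Continuous fun θ => r ^ n * sin θ ^ n).integrableOn_Icc.mono_set
    Ioo_subset_Icc_self).congr_fun
    (fun θ hθ => (abs_mul_cos_mul_pow_div_sqrt_sq_sub_sq hr n hθ).symm) measurableSet_Ioo

lemma integral_pow_div_sqrt_sq_sub_sq (hr : 0 < r) (n : ℕ) :
    ∫ y in 0..r, y ^ n / √(r ^ 2 - y ^ 2) = r ^ n * ∫ θ in 0..π / 2, sin θ ^ n := by
  rw [integral_of_le hr.le, integral_of_le (by positivity), integral_Ioc_eq_integral_Ioo,
    integral_Ioc_eq_integral_Ioo, ← image_const_mul_sin_Ioo hr,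
    integral_image_eq_integral_abs_deriv_smul measurableSet_Ioo
      (fun θ _ => ((hasDerivAt_sin θ).const_mul r).hasDerivWithinAt)
      ((strictMonoOn_const_mul_sin hr).injOn.mono Ioo_subset_Icc_self),
    ← MeasureTheory.integral_const_mul]
  exact setIntegral_congr_fun measurableSet_Ioo
    fun θ hθ => abs_mul_cos_mul_pow_div_sqrt_sq_sub_sq hr n hθ

end ArcsineSubstitution

lemma integral_sin_pow_three_zero_pi_div_two : ∫ θ in 0..π / 2, sin θ ^ 3 = 2 / 3 := by
  norm_num [integral_sin_pow_three]

lemma integral_sin_pow_four_zero_pi_div_two : ∫ θ in 0..π / 2, sin θ ^ 4 = 3 * π / 16 := by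
  norm_num [integral_sin_pow (n := 2), integral_sin_sq]
  ring

lemma integral_sin_pow_five_zero_pi_div_two : ∫ θ in 0..π / 2, sin θ ^ 5 = 8 / 15 := by
  norm_num [integral_sin_pow (n := 3), integral_sin_pow_three_zero_pi_div_two]

lemma sqrt_four_sub_two_mul_sq (y : ℝ) : √(4 - 2 * y ^ 2) = √2 * √(√2 ^ 2 - y ^ 2) := by
  rw [← sqrt_mul zero_le_two, sq_sqrt zero_le_two]
  ring_nf

lemma intervalIntegrable_pow_div_sqrt_four_sub_two_mul_sq (n : ℕ) :
    IntervalIntegrable (fun y => y ^ n / √(4 - 2 * y ^ 2)) volume 0 √2 := by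
  have h := ((intervalIntegrable_iff_integrableOn_Ioo_of_le (sqrt_nonneg 2)).2
    (integrableOn_pow_div_sqrt_sq_sub_sq (sqrt_pos.2 zero_lt_two) n)).const_mul (√2)⁻¹
  refine h.congr fun y _ => ?_
  simp only [sqrt_four_sub_two_mul_sq]
  ring

lemma integral_pow_div_sqrt_four_sub_two_mul_sq (n : ℕ) :
    ∫ y in 0..√2, y ^ n / √(4 - 2 * y ^ 2) = √2 ^ (n + 1) / 2 * ∫ θ in 0..π / 2, sin θ ^ n := by
  simp_rw [sqrt_four_sub_two_mul_sq, div_mul_eq_div_div_swap, intervalIntegral.integral_div,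
    integral_pow_div_sqrt_sq_sub_sq (sqrt_pos.2 zero_lt_two)]
  rw [div_eq_iff (by positivity)]
  linear_combination -(√2 ^ n / 2 * ∫ θ in 0..π / 2, sin θ ^ n) * sq_sqrt zero_le_two

lemma integral_moments_div_sqrt_four_sub_two_mul_sq (a b c : ℝ) :
    ∫ y in 0..√2, (a * y ^ 4 + b * y ^ 3 + c * y ^ 5) / √(4 - 2 * y ^ 2)
      = a * (3 * √2 * π / 8) + b * (4 / 3) + c * (32 / 15) := by
  have hI := intervalIntegrable_pow_div_sqrt_four_sub_two_mul_sq
  simp_rw [add_div, mul_div_assoc]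
  rw [integral_add ((hI 4).const_mul a |>.add ((hI 3).const_mul b)) ((hI 5).const_mul c),
    integral_add ((hI 4).const_mul a) ((hI 3).const_mul b), intervalIntegral.integral_const_mul,
    intervalIntegral.integral_const_mul, intervalIntegral.integral_const_mul,
    integral_pow_div_sqrt_four_sub_two_mul_sq, integral_pow_div_sqrt_four_sub_two_mul_sq,
    integral_pow_div_sqrt_four_sub_two_mul_sq,
    integral_sin_pow_three_zero_pi_div_two, integral_sin_pow_four_zero_pi_div_two,
    integral_sin_pow_five_zero_pi_div_two]
  simp only [show √2 ^ (4 + 1) = (√2 ^ 2) ^ 2 * √2 by ring,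
    show √2 ^ (3 + 1) = (√2 ^ 2) ^ 2 by ring, show √2 ^ (5 + 1) = (√2 ^ 2) ^ 3 by ring,
    sq_sqrt zero_le_two]
  ring

lemma melnikov_integrand_eq (γ3 γ4 b2 y : ℝ) :
    2 * (1 - y ^ 2) * (γ4 * y ^ 2 + γ3 * y + b2 * y ^ 3) / √(4 - 2 * y ^ 2)
        - (1 / 2) * y * √(4 - 2 * y ^ 2) * (γ4 * y + γ3 + b2 * y ^ 2)
      = -((γ4 * y ^ 4 + γ3 * y ^ 3 + b2 * y ^ 5) / √(4 - 2 * y ^ 2)) := by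
  -- where `4 - 2 y² ≤ 0` both sides are junk `0`, since then `√(4 - 2 y²) = 0`
  rcases le_or_gt (4 - 2 * y ^ 2) 0 with h | h
  · simp [sqrt_eq_zero_of_nonpos h]
  · have hs : √(4 - 2 * y ^ 2) ^ 2 = 4 - 2 * y ^ 2 := sq_sqrt h.le
    field_simp
    linear_combination -y * (y * γ4 + γ3 + y ^ 2 * b2) * hs

/-- First-order Melnikov integrals along the heteroclinic loop
(`Z₂`-equivariant case `r = s = 2`, `a₂ = 1`), for both choices of sign. -/
theorem stmt14 (γ3 γ4 b2 : ℝ) :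
    (∫ y in (Real.sqrt 2)..(0 : ℝ),
        (2 * (1 - y ^ 2) * (γ4 * y ^ 2 + γ3 * y + b2 * y ^ 3) / Real.sqrt (4 - 2 * y ^ 2)
          - (1 / 2) * y * Real.sqrt (4 - 2 * y ^ 2) * (γ4 * y + γ3 + b2 * y ^ 2)))
      = (3 * Real.sqrt 2 * Real.pi / 8) * γ4 + (32 / 15) * b2 + (4 / 3) * γ3 ∧
    (∫ y in (-Real.sqrt 2)..(0 : ℝ),
        (2 * (1 - y ^ 2) * (γ4 * y ^ 2 + γ3 * y + b2 * y ^ 3) / Real.sqrt (4 - 2 * y ^ 2)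
          - (1 / 2) * y * Real.sqrt (4 - 2 * y ^ 2) * (γ4 * y + γ3 + b2 * y ^ 2)))
      = -(3 * Real.sqrt 2 * Real.pi / 8) * γ4 + (32 / 15) * b2 + (4 / 3) * γ3 := by
  simp_rw [melnikov_integrand_eq]
  constructor
  · rw [integral_symm, intervalIntegral.integral_neg, neg_neg,
      integral_moments_div_sqrt_four_sub_two_mul_sq]
    ring
  · have hreflect : ∫ y in -√2..0, -((γ4 * y ^ 4 + γ3 * y ^ 3 + b2 * y ^ 5) / √(4 - 2 * y ^ 2))
        = ∫ y in 0..√2, (-γ4 * y ^ 4 + γ3 * y ^ 3 + b2 * y ^ 5) / √(4 - 2 * y ^ 2) := by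
      rw [← neg_zero, ← integral_comp_neg, neg_zero]
      congr 1 with y
      rw [neg_sq]
      ring
    rw [hreflect, integral_moments_div_sqrt_four_sub_two_mul_sq]
    ring
end

section
/- Let a2, b2, ν2, ν3 be real numbers with b2 ≠ 0, let D := a2² + 4·a2·b2·ν3 − 4·b2²·ν2, and assume D ≥ 0 and −a2 − 2·b2·ν3 + √D ≥ 0. Define y₊ := (√2/(2b2))·√(−a2 − 2b2ν3 + √D), y₋ := −y₊, and x± := ν3·y± + b2·y±³. Then both points E₊ = (x₊, y₊) and E₋ = (x₋, y₋) are equilibria of the Z2-equivariant system ẋ = ν2·y + ν3·x + a2·y³ + b2·x·y², ẏ = −x + ν3·y + b2·y³; that is, ν2·y± + ν3·x± + a2·y±³ + b2·x±·y±² = 0 and −x± + ν3·y± + b2·y±³ = 0. -/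
/-!
Eliminating `x = ν3 y + b2 y³` turns the first component into `y · q(y²)` with
`q(ρ) = b2² ρ² + (a2 + 2 b2 ν3) ρ + (ν2 + ν3²)`, a quadratic whose discriminant is `D`.
Both points `E±` have `y² = (-(a2 + 2 b2 ν3) + √D) / (2 b2²)`, a root of `q`.
-/

lemma sq_sqrt_two_div_mul_sqrt (b : ℝ) {t : ℝ} (ht : 0 ≤ t) :
    (Real.sqrt 2 / (2 * b) * Real.sqrt t) ^ 2 = t / (2 * b ^ 2) := by
  rw [mul_pow, div_pow, Real.sq_sqrt zero_le_two, Real.sq_sqrt ht]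
  ring

/-- The points `E₊` and `E₋` are equilibria of the `Z₂`-equivariant normal form system. -/
theorem stmt15 (a2 b2 ν2 ν3 : ℝ) (hb : b2 ≠ 0)
    (hD : 0 ≤ a2 ^ 2 + 4 * a2 * b2 * ν3 - 4 * b2 ^ 2 * ν2)
    (hpos : 0 ≤ -a2 - 2 * b2 * ν3 +
        Real.sqrt (a2 ^ 2 + 4 * a2 * b2 * ν3 - 4 * b2 ^ 2 * ν2)) :
    ∀ y : ℝ,
      (y = (Real.sqrt 2 / (2 * b2)) *
            Real.sqrt (-a2 - 2 * b2 * ν3 +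
              Real.sqrt (a2 ^ 2 + 4 * a2 * b2 * ν3 - 4 * b2 ^ 2 * ν2)) ∨
       y = -((Real.sqrt 2 / (2 * b2)) *
            Real.sqrt (-a2 - 2 * b2 * ν3 +
              Real.sqrt (a2 ^ 2 + 4 * a2 * b2 * ν3 - 4 * b2 ^ 2 * ν2)))) →
      ∀ x : ℝ, x = ν3 * y + b2 * y ^ 3 →
        ν2 * y + ν3 * x + a2 * y ^ 3 + b2 * x * y ^ 2 = 0 ∧
        -x + ν3 * y + b2 * y ^ 3 = 0 := by
  intro y hy x hx
  set D := a2 ^ 2 + 4 * a2 * b2 * ν3 - 4 * b2 ^ 2 * ν2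
  have hdisc : discrim (b2 ^ 2) (a2 + 2 * b2 * ν3) (ν2 + ν3 ^ 2) =
      Real.sqrt D * Real.sqrt D := by
    rw [Real.mul_self_sqrt hD, discrim]
    ring
  have hy2 : y ^ 2 = (-(a2 + 2 * b2 * ν3) + Real.sqrt D) / (2 * b2 ^ 2) := by
    rw [sq_eq_sq_iff_eq_or_eq_neg.2 hy, sq_sqrt_two_div_mul_sqrt b2 hpos]
    ring
  have hroot : b2 ^ 2 * (y ^ 2 * y ^ 2) + (a2 + 2 * b2 * ν3) * y ^ 2 + (ν2 + ν3 ^ 2) = 0 :=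
    (quadratic_eq_zero_iff (pow_ne_zero 2 hb) hdisc _).2 (Or.inl hy2)
  subst hx
  exact ⟨by linear_combination y * hroot, by ring⟩
end
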